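/- There exists a constant C > 0 such that for every δ ∈ (0, 1], every c ≥ 0 and every ξ ∈ (−1, 1), |F_δ(ξ) − F(ξ)| ≤ C·√δ, where F_δ is the regularized logarithmic Flory–Huggins potential and F is the logarithmic Flory–Huggins potential; in particular F_δ converges to F uniformly on (−1,1) as δ → 0⁺. -/
import Mathlib


/-- The regularized logarithmic Flory–Huggins potential `F_δ`. -/
noncomputable def Freg (δ c : ℝ) (ξ : ℝ) : ℝ :=
  (1/2) * (ξ + 1) * Real.log ((ξ + 1)^2 + δ)
    + Real.sqrt δ * Real.arctan ((ξ + 1) / Real.sqrt δ) - ξ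
  - ((1/2) * (ξ - 1) * Real.log ((ξ - 1)^2 + δ)
    + Real.sqrt δ * Real.arctan ((ξ - 1) / Real.sqrt δ) - ξ)
  - c * ξ^2

/-- The logarithmic Flory–Huggins potential `F` on `(−1, 1)`. -/
noncomputable def Flog (c : ℝ) (ξ : ℝ) : ℝ :=
  (1 + ξ) * Real.log (1 + ξ) + (1 - ξ) * Real.log (1 - ξ) - c * ξ^2

lemma log_le_two_sqrt (u : ℝ) (hu : 0 ≤ u) : Real.log (1 + u) ≤ 2 * Real.sqrt u := by
  have h1 : (0:ℝ) < 1 + u := by linarith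
  have hs : 0 < Real.sqrt (1 + u) := Real.sqrt_pos.mpr h1
  have h2 : Real.log (Real.sqrt (1 + u)) ≤ Real.sqrt (1 + u) - 1 :=
    Real.log_le_sub_one_of_pos hs
  have h3 : Real.log (Real.sqrt (1 + u)) = Real.log (1 + u) / 2 :=
    Real.log_sqrt h1.le
  have h4 : Real.sqrt (1 + u) ≤ 1 + Real.sqrt u := by
    have := Real.sq_sqrt hu
    have h5 : Real.sqrt (1 + u) ≤ Real.sqrt ((1 + Real.sqrt u)^2) := by
      apply Real.sqrt_le_sqrt
      nlinarith [Real.sqrt_nonneg u]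
    rwa [Real.sqrt_sq (by positivity)] at h5
  linarith

lemma aux_bounds (δ t : ℝ) (hδ : 0 < δ) (ht : 0 < t) :
    0 ≤ (1/2) * t * Real.log (t^2 + δ)
        + Real.sqrt δ * Real.arctan (t / Real.sqrt δ) - t * Real.log t ∧
    (1/2) * t * Real.log (t^2 + δ)
        + Real.sqrt δ * Real.arctan (t / Real.sqrt δ) - t * Real.log t
      ≤ 3 * Real.sqrt δ := by
  have hsδ : 0 < Real.sqrt δ := Real.sqrt_pos.mpr hδ
  have hlog : Real.log (t^2 + δ) = 2 * Real.log t + Real.log (1 + δ / t^2) := by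
    have : t^2 + δ = t^2 * (1 + δ / t^2) := by field_simp
    rw [this, Real.log_mul (by positivity) (by positivity), Real.log_pow]
    push_cast; ring
  have hu : 0 ≤ δ / t^2 := by positivity
  have hL0 : 0 ≤ Real.log (1 + δ / t^2) := Real.log_nonneg (by linarith)
  have hL1 : Real.log (1 + δ / t^2) ≤ 2 * (Real.sqrt δ / t) := by
    have h := log_le_two_sqrt (δ / t^2) hu
    have : Real.sqrt (δ / t^2) = Real.sqrt δ / t := by
      rw [Real.sqrt_div hδ.le, Real.sqrt_sq ht.le]
    rw [this] at h
    exact h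
  have hA0 : 0 < Real.arctan (t / Real.sqrt δ) := by
    rw [← Real.arctan_zero]
    exact Real.arctan_strictMono (by positivity)
  have hA1 : Real.arctan (t / Real.sqrt δ) < Real.pi / 2 := Real.arctan_lt_pi_div_two _
  have hpi : Real.pi / 2 ≤ 2 := by
    have := Real.pi_le_four; linarith
  rw [hlog]
  have e : (1/2) * t * (2 * Real.log t + Real.log (1 + δ / t^2))
      + Real.sqrt δ * Real.arctan (t / Real.sqrt δ) - t * Real.log t
      = (1/2) * t * Real.log (1 + δ / t^2)
        + Real.sqrt δ * Real.arctan (t / Real.sqrt δ) := by ring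
  rw [e]
  have hterm : (1/2) * t * Real.log (1 + δ / t^2) ≤ Real.sqrt δ := by
    calc (1/2) * t * Real.log (1 + δ / t^2) ≤ (1/2) * t * (2 * (Real.sqrt δ / t)) := by
          nlinarith
      _ = Real.sqrt δ := by field_simp
  have harc : Real.sqrt δ * Real.arctan (t / Real.sqrt δ) ≤ 2 * Real.sqrt δ := by
    nlinarith
  constructor
  · nlinarith [mul_nonneg ht.le hL0, mul_nonneg hsδ.le hA0.le]
  · linarith

/-- there exists `C > 0` such that for all `δ ∈ (0,1]`, `c ≥ 0`
and `ξ ∈ (−1,1)`, `|F_δ(ξ) − F(ξ)| ≤ C·√δ`. -/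
theorem Freg_unif_conv :
    ∃ C : ℝ, 0 < C ∧ ∀ δ : ℝ, δ ∈ Set.Ioc (0:ℝ) 1 → ∀ c : ℝ, 0 ≤ c →
      ∀ ξ ∈ Set.Ioo (-1 : ℝ) 1,
        |Freg δ c ξ - Flog c ξ| ≤ C * Real.sqrt δ := by
  refine ⟨6, by norm_num, ?_⟩
  intro δ hδ c hc ξ hξ
  have h1 := aux_bounds δ (1 + ξ) hδ.1 (by linarith [hξ.1])
  have h2 := aux_bounds δ (1 - ξ) hδ.1 (by linarith [hξ.2])
  have hsδ : 0 ≤ Real.sqrt δ := Real.sqrt_nonneg δ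
  have key : Freg δ c ξ - Flog c ξ =
      ((1/2) * (1+ξ) * Real.log ((1+ξ)^2 + δ)
        + Real.sqrt δ * Real.arctan ((1+ξ) / Real.sqrt δ) - (1+ξ) * Real.log (1+ξ))
      + ((1/2) * (1-ξ) * Real.log ((1-ξ)^2 + δ)
        + Real.sqrt δ * Real.arctan ((1-ξ) / Real.sqrt δ) - (1-ξ) * Real.log (1-ξ)) := by
    unfold Freg Flog
    rw [show (ξ - 1)^2 = (1 - ξ)^2 by ring,
        show (ξ - 1) / Real.sqrt δ = -((1 - ξ) / Real.sqrt δ) by ring,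
        Real.arctan_neg,
        show ξ + 1 = 1 + ξ by ring]
    ring
  rw [key, abs_le]
  constructor <;> nlinarith [h1.1, h1.2, h2.1, h2.2]
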